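/- For every n ≥ 1, every binary sequence of length n satisfies the TGP(1) constraint after a suitable assignment of signs, i.e. B_{3;1}(n) = {0,1}^n; consequently the capacity of the TGP(1) constraint is H_3(1) = 1. In particular, labeling the ones of any binary sequence with alternating signs + , − , + , − , … (in order of occurrence) yields a ternary sequence satisfying the TGP(1) constraint. (Theorem 7) -/

import Mathlib

/-- `x` is a ternary sequence: every entry lies in `{-1, 0, 1} ⊆ ℤ`. -/
def IsTernary {n : ℕ} (x : Fin n → ℤ) : Prop :=
  ∀ i, x i = -1 ∨ x i = 0 ∨ x i = 1

/-- A ternary sequence `x` of length `n` (0-indexed positions) satisfies the TGP(t)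
constraint: for all positions `k, l, m` in the support of `x` (not necessarily
distinct) with `x k = x l = x m` and `max {|k-l|, |l-m|, |m-k|} ≤ t`, if the
integer `k + l - m` is a valid position then it also lies in the support of `x`. -/
def SatisfiesTGPt (t : ℕ) {n : ℕ} (x : Fin n → ℤ) : Prop :=
  ∀ k l m : Fin n, x k ≠ 0 → x k = x l → x l = x m →
    max (max |((k : ℕ) : ℤ) - ((l : ℕ) : ℤ)| |((l : ℕ) : ℤ) - ((m : ℕ) : ℤ)|)
        |((m : ℕ) : ℤ) - ((k : ℕ) : ℤ)| ≤ (t : ℤ) →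
    ∀ i : Fin n, ((i : ℕ) : ℤ) = ((k : ℕ) : ℤ) + ((l : ℕ) : ℤ) - ((m : ℕ) : ℤ) →
      x i ≠ 0

/-- `B3t t n = ξ(T_{3;t}(n))`: binary sequences of length `n` obtainable as
componentwise absolute values of TGP(t)-constrained ternary sequences. -/
def B3t (t n : ℕ) : Set (Fin n → Fin 2) :=
  {y | ∃ x : Fin n → ℤ, IsTernary x ∧ SatisfiesTGPt t x ∧
    y = fun i => if x i = 0 then 0 else 1}

/-- Label the ones of a binary sequence `y` with alternating signs `+, -, +, -, …`
in order of occurrence: the `(p+1)`-st one (with `p` ones strictly before it) gets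
the sign `(-1)^p`. -/
def altSign {n : ℕ} (y : Fin n → Fin 2) : Fin n → ℤ :=
  fun i => if (y i).val = 0 then 0
    else (-1) ^ (Finset.univ.filter (fun j : Fin n => j < i ∧ (y j).val ≠ 0)).card

/-!
Adjacent ones of `y` receive opposite signs under `altSign`, so two positions at distance at
most one carrying the same nonzero value coincide. In a TGP(1) triple `k, l, m` this forces
`k = l = m`, hence `k + l - m = k` lies in the support. Thus every binary sequence is attained,
`|B_{3;1}(n)| = 2ⁿ`, and the capacity is `1`.
-/

theorem satisfiesTGPt_one_of_eq_of_abs_sub_le_one {n : ℕ} (x : Fin n → ℤ)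
    (hx : ∀ a b : Fin n, x a ≠ 0 → x a = x b → |((a : ℕ) : ℤ) - ((b : ℕ) : ℤ)| ≤ 1 → a = b) :
    SatisfiesTGPt 1 x := by
  intro k l m hk hkl hlm hmax i hi
  have hkl' : k = l := hx k l hk hkl ((le_max_left _ _).trans ((le_max_left _ _).trans hmax))
  have hkm : k = m := hx k m hk (hkl.trans hlm) <| by
    rw [abs_sub_comm]; exact (le_max_right _ _).trans hmax
  subst hkl' hkm
  obtain rfl : i = k := Fin.ext (by omega)
  exact hk

section altSign

variable {n : ℕ} (y : Fin n → Fin 2)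

theorem altSign_ne_zero_iff (i : Fin n) : altSign y i ≠ 0 ↔ y i ≠ 0 := by
  by_cases h : y i = 0 <;> simp [altSign, h, Fin.val_eq_zero_iff]

theorem isTernary_altSign : IsTernary (altSign y) := by
  intro i
  unfold altSign
  split_ifs
  · exact Or.inr (Or.inl rfl)
  · rcases neg_one_pow_eq_or ℤ
      (Finset.univ.filter (fun j : Fin n => j < i ∧ (y j).val ≠ 0)).card with h | h
    · exact Or.inr (Or.inr h)
    · exact Or.inl h

theorem altSign_succ {a b : Fin n} (ha : y a ≠ 0) (hb : y b ≠ 0) (hab : (b : ℕ) = a + 1) :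
    altSign y b = -altSign y a := by
  have hya : (y a).val ≠ 0 := by simpa [Fin.val_eq_zero_iff] using ha
  have hyb : (y b).val ≠ 0 := by simpa [Fin.val_eq_zero_iff] using hb
  have hbefore : Finset.univ.filter (fun j : Fin n => j < b ∧ (y j).val ≠ 0)
      = insert a (Finset.univ.filter (fun j : Fin n => j < a ∧ (y j).val ≠ 0)) := by
    ext j
    simp only [Finset.mem_filter, Finset.mem_insert, Finset.mem_univ, true_and, Fin.lt_def,
      Fin.ext_iff, hab]
    constructor
    · rintro ⟨hj, hP⟩
      rcases Nat.lt_succ_iff_lt_or_eq.mp hj with h | h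
      · exact Or.inr ⟨h, hP⟩
      · exact Or.inl h
    · rintro (h | ⟨h, hP⟩)
      · exact ⟨by omega, by rwa [Fin.ext h]⟩
      · exact ⟨by omega, hP⟩
  simp only [altSign, hya, hyb, if_false]
  rw [hbefore, Finset.card_insert_of_notMem (by simp), pow_succ, mul_neg_one]

theorem eq_of_altSign_eq {a b : Fin n} (ha : altSign y a ≠ 0) (h : altSign y a = altSign y b)
    (hd : |((a : ℕ) : ℤ) - ((b : ℕ) : ℤ)| ≤ 1) : a = b := by
  have hya := (altSign_ne_zero_iff y a).mp ha
  have hyb := (altSign_ne_zero_iff y b).mp (h ▸ ha)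
  rw [abs_le] at hd
  rcases (by omega : (a : ℕ) = b ∨ (b : ℕ) = a + 1 ∨ (a : ℕ) = b + 1) with hab | hab | hab
  · exact Fin.ext hab
  · rw [altSign_succ y hya hyb hab] at h; omega
  · rw [altSign_succ y hyb hya hab] at h ha; omega

theorem satisfiesTGPt_one_altSign : SatisfiesTGPt 1 (altSign y) :=
  satisfiesTGPt_one_of_eq_of_abs_sub_le_one _ fun _ _ => eq_of_altSign_eq y

theorem support_altSign : (fun i => if altSign y i = 0 then (0 : Fin 2) else 1) = y := by
  funext i
  by_cases h : y i = 0
  · simp [altSign, h]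
  · simp only [(altSign_ne_zero_iff y i).mpr h, if_false]
    omega

end altSign

theorem B3t_one_eq_univ (n : ℕ) : B3t 1 n = Set.univ :=
  Set.eq_univ_of_forall fun y =>
    ⟨altSign y, isTernary_altSign y, satisfiesTGPt_one_altSign y, (support_altSign y).symm⟩

theorem natCard_B3t_one (n : ℕ) : Nat.card (B3t 1 n) = 2 ^ n := by
  rw [B3t_one_eq_univ, Nat.card_univ, Nat.card_eq_fintype_card, Fintype.card_fun,
    Fintype.card_fin, Fintype.card_fin]

/-- **Theorem 7.** For every `n ≥ 1`, `B_{3;1}(n) = {0,1}ⁿ`, and consequently the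
capacity of the TGP(1) constraint is `H_3(1) = 1`. In particular, labeling the
ones of any binary sequence with alternating signs yields a ternary sequence
satisfying the TGP(1) constraint (whose absolute value is the original sequence). -/
theorem tgp1_full_capacity :
    (∀ n : ℕ, 1 ≤ n → B3t 1 n = Set.univ) ∧
    Filter.Tendsto (fun n : ℕ => Real.logb 2 (Nat.card ↥(B3t 1 n)) / (n : ℝ))
      Filter.atTop (nhds 1) ∧
    (∀ (n : ℕ) (y : Fin n → Fin 2),
      IsTernary (altSign y) ∧ SatisfiesTGPt 1 (altSign y) ∧
      (fun i => if altSign y i = 0 then (0 : Fin 2) else 1) = y) := by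
  refine ⟨fun n _ => B3t_one_eq_univ n, ?_, fun n y =>
    ⟨isTernary_altSign y, satisfiesTGPt_one_altSign y, support_altSign y⟩⟩
  refine tendsto_const_nhds.congr' ?_
  filter_upwards [Filter.eventually_ne_atTop 0] with n hn
  rw [natCard_B3t_one, Nat.cast_pow, Nat.cast_ofNat, Real.logb_pow,
    Real.logb_self_eq_one one_lt_two, mul_one, div_self (Nat.cast_ne_zero.mpr hn)]
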